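/- Let K be the block-rearrangement operator sending C ∈ ℝ^{(p₁d₁)×(p₂d₂)} to the (p₁p₂)×(d₁d₂) matrix of vectorized blocks. A matrix C admits a representation C = ∑_{r=1}^R A_r ⊗ B_r with A_r ∈ ℝ^{p₁×p₂}, B_r ∈ ℝ^{d₁×d₂} if and only if rank(K(C)) ≤ R. -/

import Mathlib

open Matrix Kronecker

def K {p₁ p₂ d₁ d₂ : ℕ} (C : Matrix (Fin p₁ × Fin d₁) (Fin p₂ × Fin d₂) ℝ) :
    Matrix (Fin p₁ × Fin p₂) (Fin d₁ × Fin d₂) ℝ :=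
  fun q r => C (q.1, r.1) (q.2, r.2)

/-!
`K` is injective and turns `∑ r, A r ⊗ₖ B r` into `U * V`, where column `r` of `U` is the
vectorization of `A r` and row `r` of `V` that of `B r`. So the theorem reduces
to rank factorization: a matrix has rank at most `R` iff it factors through `Fin R`, which follows by
writing each column in a spanning family of the column space padded by zeros to `R` vectors.
-/

namespace Matrix

variable {m n ι 𝕜 : Type*} [Field 𝕜]

theorem exists_eq_mul_of_forall_col_mem_span [Fintype ι] (M : Matrix m n 𝕜) (u : ι → m → 𝕜)
    (hM : ∀ j, M.col j ∈ Submodule.span 𝕜 (Set.range u)) :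
    ∃ V : Matrix ι n 𝕜, M = (of fun i r => u r i) * V := by
  choose c hc using fun j => (Submodule.mem_span_range_iff_exists_fun 𝕜).mp (hM j)
  refine ⟨of fun r j => c j r, ?_⟩
  ext i j
  change M.col j i = _
  rw [← hc j]
  simp [mul_apply, Finset.sum_apply, mul_comm]

theorem rank_le_iff_exists_eq_mul [Fintype m] [Fintype n] (M : Matrix m n 𝕜) (R : ℕ) :
    M.rank ≤ R ↔ ∃ (U : Matrix m (Fin R) 𝕜) (V : Matrix (Fin R) n 𝕜), M = U * V := by
  constructor
  · intro h
    rw [rank_eq_finrank_span_cols] at h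
    obtain ⟨f, -, hf_span, -⟩ := Submodule.exists_fun_fin_finrank_span_eq 𝕜 (Set.range M.col)
    let u : Fin R → m → 𝕜 := fun r => if hr : (r : ℕ) < _ then f ⟨r, hr⟩ else 0
    have hf_le : Set.range f ⊆ Set.range u := by
      rintro _ ⟨k, rfl⟩
      exact ⟨Fin.castLE h k, by simp [u, k.isLt]⟩
    refine ⟨_, exists_eq_mul_of_forall_col_mem_span M u fun j => ?_⟩
    exact Submodule.span_mono hf_le (hf_span.ge (Submodule.subset_span ⟨j, rfl⟩))
  · rintro ⟨U, V, rfl⟩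
    calc (U * V).rank ≤ U.rank := rank_mul_le_left U V
      _ ≤ Fintype.card (Fin R) := rank_le_card_width U
      _ = R := Fintype.card_fin R

end Matrix

theorem K_injective {p₁ p₂ d₁ d₂ : ℕ} :
    Function.Injective (K : Matrix (Fin p₁ × Fin d₁) (Fin p₂ × Fin d₂) ℝ → _) :=
  fun _ _ h => by
    ext ⟨i, k⟩ ⟨j, l⟩
    exact congrFun₂ h (i, j) (k, l)

theorem K_sum_kronecker {p₁ p₂ d₁ d₂ R : ℕ} (A : Fin R → Matrix (Fin p₁) (Fin p₂) ℝ)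
    (B : Fin R → Matrix (Fin d₁) (Fin d₂) ℝ) :
    K (∑ r, A r ⊗ₖ B r) = (of fun q r => A r q.1 q.2) * (of fun r s => B r s.1 s.2) := by
  ext
  simp [K, mul_apply, Matrix.sum_apply]

/-- `C` admits an `R`-term Kronecker product decomposition iff the
rearranged matrix `K(C)` has rank at most `R`. -/
theorem skpd_representation_iff_rank_le {p₁ p₂ d₁ d₂ R : ℕ}
    (C : Matrix (Fin p₁ × Fin d₁) (Fin p₂ × Fin d₂) ℝ) :
    (∃ (A : Fin R → Matrix (Fin p₁) (Fin p₂) ℝ)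
       (B : Fin R → Matrix (Fin d₁) (Fin d₂) ℝ),
        C = ∑ r, A r ⊗ₖ B r) ↔ (K C).rank ≤ R := by
  rw [rank_le_iff_exists_eq_mul]
  constructor
  · rintro ⟨A, B, rfl⟩
    exact ⟨_, _, K_sum_kronecker A B⟩
  · rintro ⟨U, V, hUV⟩
    refine ⟨fun r => of fun i j => U (i, j) r, fun r => of fun k l => V r (k, l), K_injective ?_⟩
    rw [hUV, K_sum_kronecker]
    rfl
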